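/- Lagrange inversion for Rev: for a power series g with g(0) invertible, the n-th coefficient of Rev(g) equals (1/(n+1)) times the n-th coefficient of 1/g(x)^{n+1}. -/

import Mathlib

/-!
Put `F = X * Rg`. Substituting `F` is a ring homomorphism and the hypothesis reads
`F * g(F) = X`, so `g(F) = Rg⁻¹` and `(g⁻¹) ^ (n + 1)` becomes `Rg ^ (n + 1)` under substitution.

The coefficient is then extracted by the residue form of the change of variables: for any `A`
and any `R` with `R(0) ≠ 0`, `[Xⁿ] A(X R) * R^(-(n+1)) * (X R)' = [Xⁿ] A`, since
`[Xᵐ] R^(-(m+1)) * (X R)' = δₘ₀`; for `m ≥ 1` this holds because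
`m R^(-(m+1)) (X R)' = m R^(-m) - X (R^(-m))'` and `[Xᵐ] X f' = m [Xᵐ] f`.
With `A = g⁻¹ ^ (n + 1)` and `R = Rg` the left side is `[Xⁿ] (X Rg)' = (n + 1) [Xⁿ] Rg`.
-/

open PowerSeries

/-- Composition (substitution) of formal power series, meaningful when the
second argument has zero constant term. -/
noncomputable def psComp {K : Type*} [Field K] (f g : K⟦X⟧) : K⟦X⟧ :=
  PowerSeries.mk fun n => ∑ k ∈ Finset.range (n + 1), coeff k f * coeff n (g ^ k)

namespace PowerSeries

section CommRing

variable {R : Type*} [CommRing R]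

theorem coeff_pow_eq_zero_of_lt {F : R⟦X⟧} (hF : constantCoeff F = 0) {m j : ℕ} (h : m < j) :
    coeff m (F ^ j) = 0 :=
  coeff_of_lt_order _ <| (Nat.cast_lt.2 h).trans_le (le_order_pow_of_constantCoeff_eq_zero j hF)

theorem coeff_subst_eq_sum_range {F : R⟦X⟧} (hF : constantCoeff F = 0) (A : R⟦X⟧) {m N : ℕ}
    (hmN : m ≤ N) :
    coeff m (A.subst F) = ∑ j ∈ Finset.range (N + 1), coeff j A * coeff m (F ^ j) := by
  rw [coeff_subst' (HasSubst.of_constantCoeff_zero' hF)]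
  refine finsum_eq_sum_of_support_subset _ fun j hj => ?_
  by_contra hjN
  rw [Finset.coe_range, Set.mem_Iio, not_lt] at hjN
  exact hj (by simp only [coeff_pow_eq_zero_of_lt hF (show m < j by omega), smul_zero])

theorem coeff_subst_mul {F : R⟦X⟧} (hF : constantCoeff F = 0) (A B : R⟦X⟧) (n : ℕ) :
    coeff n (A.subst F * B) = ∑ j ∈ Finset.range (n + 1), coeff j A * coeff n (F ^ j * B) := by
  calc coeff n (A.subst F * B)
      = ∑ p ∈ Finset.HasAntidiagonal.antidiagonal n, ∑ j ∈ Finset.range (n + 1),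
          coeff j A * (coeff p.1 (F ^ j) * coeff p.2 B) := by
        rw [coeff_mul]
        refine Finset.sum_congr rfl fun p hp => ?_
        rw [coeff_subst_eq_sum_range hF A (Finset.HasAntidiagonal.antidiagonal.fst_le hp),
          Finset.sum_mul]
        simp only [mul_assoc]
    _ = ∑ j ∈ Finset.range (n + 1), coeff j A * coeff n (F ^ j * B) := by
        simp only [Finset.sum_comm (s := Finset.HasAntidiagonal.antidiagonal n), coeff_mul,
          Finset.mul_sum]

theorem coeff_X_mul_derivative (f : R⟦X⟧) (m : ℕ) :
    coeff m (X * d⁄dX R f) = m * coeff m f := by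
  cases m with
  | zero => simp
  | succ m => rw [coeff_succ_X_mul, coeff_derivative, mul_comm]; push_cast; ring

end CommRing

variable {K : Type*} [Field K]

theorem psComp_eq_subst {F : K⟦X⟧} (hF : constantCoeff F = 0) (f : K⟦X⟧) :
    psComp f F = f.subst F := by
  ext m
  rw [psComp, coeff_mk, coeff_subst_eq_sum_range hF f le_rfl]

theorem coeff_inv_pow_succ_mul_derivative [CharZero K] {R : K⟦X⟧} (hR : constantCoeff R ≠ 0)
    (m : ℕ) :
    coeff m (R⁻¹ ^ (m + 1) * d⁄dX K (X * R)) = if m = 0 then 1 else 0 := by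
  have hRinv : R * R⁻¹ = 1 := PowerSeries.mul_inv_cancel R hR
  have hderiv : d⁄dX K (X * R) = R + X * d⁄dX K R := by
    rw [Derivation.leibniz, derivative_X, smul_eq_mul, smul_eq_mul, mul_one]; ring
  cases m with
  | zero => simp [hderiv, hR]
  | succ k =>
    rw [if_neg k.succ_ne_zero]
    have hexact : ((k + 1 : ℕ) : K⟦X⟧) * (R⁻¹ ^ (k + 2) * d⁄dX K (X * R)) =
        ((k + 1 : ℕ) : K⟦X⟧) * R⁻¹ ^ (k + 1) - X * d⁄dX K (R⁻¹ ^ (k + 1)) := by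
      rw [derivative_pow, derivative_inv', hderiv]
      push_cast
      linear_combination ((k : K⟦X⟧) + 1) * R⁻¹ ^ (k + 1) * hRinv
    have hcoeff := congrArg (coeff (k + 1)) hexact
    rw [map_sub, coeff_X_mul_derivative, ← map_natCast (C (R := K)), coeff_C_mul, coeff_C_mul,
      sub_self, mul_eq_zero] at hcoeff
    exact hcoeff.resolve_left (Nat.cast_ne_zero.2 k.succ_ne_zero)

theorem X_mul_pow_mul_inv_pow {R : K⟦X⟧} (hR : constantCoeff R ≠ 0) {j n : ℕ} (h : j ≤ n) :
    (X * R) ^ j * R⁻¹ ^ (n + 1) = X ^ j * R⁻¹ ^ (n - j + 1) := by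
  rw [show n + 1 = j + (n - j + 1) by omega, pow_add, mul_pow, mul_assoc, ← mul_assoc (R ^ j),
    ← mul_pow, PowerSeries.mul_inv_cancel R hR, one_pow, one_mul]

theorem coeff_subst_X_mul_mul_inv_pow_derivative [CharZero K] (A : K⟦X⟧) {R : K⟦X⟧}
    (hR : constantCoeff R ≠ 0) (n : ℕ) :
    coeff n (A.subst (X * R) * (R⁻¹ ^ (n + 1) * d⁄dX K (X * R))) = coeff n A := by
  rw [coeff_subst_mul (by simp), Finset.sum_eq_single_of_mem n (by simp)]
  · rw [← mul_assoc, X_mul_pow_mul_inv_pow hR le_rfl, mul_assoc, coeff_X_pow_mul',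
      if_pos le_rfl, Nat.sub_self, coeff_inv_pow_succ_mul_derivative hR, if_pos rfl, mul_one]
  · intro j hj hjn
    have hjn' : j < n := by rw [Finset.mem_range] at hj; omega
    rw [← mul_assoc, X_mul_pow_mul_inv_pow hR hjn'.le, mul_assoc, coeff_X_pow_mul',
      if_pos hjn'.le, coeff_inv_pow_succ_mul_derivative hR, if_neg (by omega), mul_zero]

end PowerSeries

theorem lagrange_inversion_rev {K : Type*} [Field K] [CharZero K] (g Rg : K⟦X⟧)
    (h0 : constantCoeff g ≠ 0)
    (hR : psComp (X * g) (X * Rg) = X) (n : ℕ) :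
    coeff n Rg = ((n : K) + 1)⁻¹ * coeff n (g⁻¹ ^ (n + 1)) := by
  have hF : constantCoeff (X * Rg) = 0 := by simp
  set σ := substAlgHom (HasSubst.of_constantCoeff_zero' hF) (R := K)
  have hσ : ∀ f, σ f = f.subst (X * Rg) := fun f => by rw [coe_substAlgHom]
  have hRg_mul : Rg * σ g = 1 := by
    refine mul_left_cancel₀ X_ne_zero ?_
    calc X * (Rg * σ g) = σ (X * g) := by rw [map_mul, substAlgHom_X, mul_assoc]
      _ = X * 1 := by rw [hσ, ← psComp_eq_subst hF, hR, mul_one]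
  have hR0 : constantCoeff Rg ≠ 0 :=
    left_ne_zero_of_mul_eq_one (by rw [← map_mul, hRg_mul, map_one])
  have hσ_inv : σ g⁻¹ = Rg :=
    left_inv_eq_right_inv (by rw [← map_mul, PowerSeries.inv_mul_cancel g h0, map_one])
      (by rw [mul_comm, hRg_mul])
  have key := coeff_subst_X_mul_mul_inv_pow_derivative (g⁻¹ ^ (n + 1)) hR0 n
  rw [← hσ, map_pow, hσ_inv, ← mul_assoc, ← mul_pow, PowerSeries.mul_inv_cancel Rg hR0, one_pow,
    one_mul, coeff_derivative, coeff_succ_X_mul] at key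
  rw [← key]
  field_simp
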